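/- arXiv:2107.10000 — 3 statements merged into one kernel-verified Lean document; each statement's English description precedes it below -/
import Mathlib

section
/- Let J ⊆ T be a nonempty compact set such that 0ₙ ∉ conv{a_t : t ∈ J}. Then there exist b̂ ∈ C(T,ℝ) and x̂ ∈ ℝⁿ such that F(b̂) ≠ ∅, x̂ ∉ F(b̂), and J = J_{b̂}(x̂), i.e. J = {t ∈ T : a_t'x̂ − b̂_t = sup_{s∈T}(a_s'x̂ − b̂_s)}. -/
open Filter Set
open scoped Topology

/-- The feasible set `F(b) = {x ∈ ℝⁿ : aₜ'x ≤ bₜ for all t ∈ T}`. -/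
def feas {n : ℕ} {T : Type*} [TopologicalSpace T]
    (a : T → (Fin n → ℝ)) (b : C(T, ℝ)) : Set (Fin n → ℝ) :=
  {x | ∀ t : T, (∑ i, a t i * x i) ≤ b t}

private lemma sum_pad {m k : ℕ} (hk : k ≤ m) {M : Type*} [AddCommMonoid M] (f : Fin k → M) :
    (∑ i : Fin m, if h : (i : ℕ) < k then f ⟨i, h⟩ else 0) = ∑ j : Fin k, f j := by
  set F : ℕ → M := fun i => if h : i < k then f ⟨i, h⟩ else 0 with hF
  have h1 : (∑ i : Fin m, if h : (i : ℕ) < k then f ⟨i, h⟩ else 0) = ∑ i ∈ Finset.range m, F i :=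
    Fin.sum_univ_eq_sum_range F m
  have h2 : ∑ i ∈ Finset.range k, F i = ∑ i ∈ Finset.range m, F i := by
    apply Finset.sum_subset (Finset.range_subset_range.2 hk)
    intro i _ hi
    simp only [Finset.mem_range, not_lt] at hi
    simp [hF, Nat.not_lt.2 hi]
  have h3 : ∑ i ∈ Finset.range k, F i = ∑ j : Fin k, f j := by
    rw [← Fin.sum_univ_eq_sum_range F k]
    exact Finset.sum_congr rfl fun j _ => by simp [hF, j.isLt]
  rw [h1, ← h2, h3]

private lemma isCompact_convexHull_of_isCompact {n : ℕ} {s : Set (Fin n → ℝ)}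
    (hs : IsCompact s) : IsCompact (convexHull ℝ s) := by
  rcases s.eq_empty_or_nonempty with rfl | ⟨z₀, hz₀⟩
  · simp only [convexHull_empty]; exact isCompact_empty
  classical
  set m := n + 1 with hm
  set φ : (Fin m → ℝ) × (Fin m → (Fin n → ℝ)) → (Fin n → ℝ) :=
    fun p => ∑ i : Fin m, p.1 i • p.2 i with hφ
  have hφc : Continuous φ := by
    apply continuous_finset_sum
    intro i _
    exact ((continuous_apply i).comp continuous_fst).smul
      ((continuous_apply i).comp continuous_snd)
  set D : Set ((Fin m → ℝ) × (Fin m → (Fin n → ℝ))) :=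
    (stdSimplex ℝ (Fin m)) ×ˢ (Set.univ.pi fun _ : Fin m => s) with hD
  have hDc : IsCompact D :=
    (isCompact_stdSimplex ℝ (Fin m)).prod (isCompact_univ_pi fun _ => hs)
  have himg : φ '' D = convexHull ℝ s := by
    apply Subset.antisymm
    · rintro _ ⟨⟨w, z⟩, ⟨⟨hw0, hw1⟩, hz⟩, rfl⟩
      exact (convex_convexHull ℝ s).sum_mem (fun i _ => hw0 i) hw1
        (fun i _ => subset_convexHull ℝ s (hz i trivial))
    · rw [convexHull_eq_union]
      rintro x hx
      simp only [Set.mem_iUnion] at hx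
      obtain ⟨t, hts, hai, hxt⟩ := hx
      have hcard : t.card ≤ m := by
        have h1 := hai.card_le_finrank_succ
        have h2 : Module.finrank ℝ (vectorSpan ℝ (Set.range ((↑) : t → (Fin n → ℝ)))) ≤ n := by
          have := Submodule.finrank_le (vectorSpan ℝ (Set.range ((↑) : t → (Fin n → ℝ))))
          simpa using this
        have h3 : Fintype.card ↥t = t.card := Fintype.card_coe t
        omega
      rw [Finset.convexHull_eq] at hxt
      obtain ⟨w, hw0, hw1, hwx⟩ := hxt
      rw [Finset.centerMass_eq_of_sum_1 _ _ hw1] at hwx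
      set p : Fin m → ℝ :=
        fun i => if h : (i : ℕ) < t.card
          then w ((t.equivFin.symm ⟨i, h⟩ : ↥t) : Fin n → ℝ) else 0 with hp
      set q : Fin m → (Fin n → ℝ) :=
        fun i => if h : (i : ℕ) < t.card
          then ((t.equivFin.symm ⟨i, h⟩ : ↥t) : Fin n → ℝ) else z₀ with hq
      refine ⟨(p, q), ⟨⟨fun i => ?_, ?_⟩, fun i _ => ?_⟩, ?_⟩
      · by_cases h : (i : ℕ) < t.card
        · simp only [hp, dif_pos h]
          exact hw0 _ (t.equivFin.symm ⟨i, h⟩).2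
        · simp [hp, dif_neg h]
      · have h1 : (∑ i : Fin m, p i)
            = ∑ j : Fin t.card, w ((t.equivFin.symm j : ↥t) : Fin n → ℝ) := by
          simp only [hp]
          exact sum_pad hcard (fun j => w ((t.equivFin.symm j : ↥t) : Fin n → ℝ))
        have h2 : (∑ j : Fin t.card, w ((t.equivFin.symm j : ↥t) : Fin n → ℝ))
            = ∑ j : ↥t, w (j : Fin n → ℝ) :=
          Equiv.sum_comp t.equivFin.symm (fun j : ↥t => w (j : Fin n → ℝ))
        have h3 : (∑ j : ↥t, w (j : Fin n → ℝ)) = ∑ j ∈ t, w j := Finset.sum_coe_sort t w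
        rw [h1, h2, h3]
        exact hw1
      · by_cases h : (i : ℕ) < t.card
        · simp only [hq, dif_pos h]
          exact hts (t.equivFin.symm ⟨i, h⟩).2
        · simp [hq, dif_neg h, hz₀]
      · show (∑ i : Fin m, p i • q i) = x
        have h1 : (∑ i : Fin m, p i • q i)
            = ∑ i : Fin m, (if h : (i : ℕ) < t.card
                then w ((t.equivFin.symm ⟨i, h⟩ : ↥t) : Fin n → ℝ)
                  • ((t.equivFin.symm ⟨i, h⟩ : ↥t) : Fin n → ℝ) else 0) := by
          refine Finset.sum_congr rfl fun i _ => ?_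
          by_cases h : (i : ℕ) < t.card
          · simp [hp, hq, dif_pos h]
          · simp [hp, hq, dif_neg h]
        have h2 := sum_pad hcard (fun j : Fin t.card =>
          w ((t.equivFin.symm j : ↥t) : Fin n → ℝ) • ((t.equivFin.symm j : ↥t) : Fin n → ℝ))
        have h3 : (∑ j : Fin t.card,
              w ((t.equivFin.symm j : ↥t) : Fin n → ℝ) • ((t.equivFin.symm j : ↥t) : Fin n → ℝ))
            = ∑ j : ↥t, w (j : Fin n → ℝ) • (j : Fin n → ℝ) :=
          Equiv.sum_comp t.equivFin.symm (fun j : ↥t => w (j : Fin n → ℝ) • (j : Fin n → ℝ))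
        have h4 : (∑ j : ↥t, w (j : Fin n → ℝ) • (j : Fin n → ℝ)) = ∑ j ∈ t, w j • j :=
          Finset.sum_coe_sort t (fun v => w v • v)
        rw [h1, h2, h3, h4, ← hwx]
        exact Finset.sum_congr rfl fun j _ => rfl
  rw [← himg]
  exact hDc.image hφc


/-- the construction in the proof of Theorem `Th_hof:global`. Let `T` be a
compact metric space, `t ↦ a_t` continuous, and `J ⊆ T` a nonempty compact set with
`0ₙ ∉ conv{a_t : t ∈ J}`. Then there exist `b̂ ∈ C(T,ℝ)` and `x̂ ∈ ℝⁿ` such that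
`F(b̂) ≠ ∅`, `x̂ ∉ F(b̂)` and `J = J_{b̂}(x̂) = {t ∈ T : a_t'x̂ − b̂_t = sup_s (a_s'x̂ − b̂_s)}`. -/
theorem exists_parameter_with_active_set
    {n : ℕ} {T : Type*} [MetricSpace T] [CompactSpace T]
    (a : T → (Fin n → ℝ)) (ha : Continuous a)
    (J : Set T) (hJne : J.Nonempty) (hJcp : IsCompact J)
    (hJ : (0 : Fin n → ℝ) ∉ convexHull ℝ (a '' J)) :
    ∃ (bhat : C(T, ℝ)) (xhat : Fin n → ℝ),
      (feas a bhat).Nonempty ∧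
      xhat ∉ feas a bhat ∧
      J = {t : T | (∑ i, a t i * xhat i) - bhat t
              = ⨆ s : T, ((∑ i, a s i * xhat i) - bhat s)} := by
  obtain ⟨t₀, ht₀⟩ := hJne
  haveI : Nonempty T := ⟨t₀⟩
  have hS : IsCompact (convexHull ℝ (a '' J)) :=
    isCompact_convexHull_of_isCompact (hJcp.image ha)
  obtain ⟨f, u, hf0, hfS⟩ :=
    geometric_hahn_banach_point_closed (convex_convexHull ℝ _) hS.isClosed hJ
  have hu : 0 < u := by simpa using hf0
  set y : Fin n → ℝ := fun i => -f (Pi.single i 1) with hy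
  set g : T → ℝ := fun t => ∑ i, a t i * y i with hgdef
  have hgc : Continuous g :=
    continuous_finset_sum _ fun i _ => ((continuous_apply i).comp ha).mul continuous_const
  have hg : ∀ t ∈ J, g t ≤ -u := by
    intro t ht
    have haS : a t ∈ convexHull ℝ (a '' J) := subset_convexHull ℝ _ ⟨t, ht, rfl⟩
    have hft := hfS _ haS
    have hrepr : f (a t) = ∑ i, a t i * f (Pi.single i 1) := by
      have h1 : (a t) = ∑ i, (a t i) • (Pi.single i 1 : Fin n → ℝ) := by
        funext j
        simp [Finset.sum_apply, Pi.single_apply]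
      conv_lhs => rw [h1]
      rw [map_sum]
      simp [smul_eq_mul]
    have hgt : g t = -f (a t) := by
      rw [hrepr]
      simp only [hgdef, hy, mul_neg, Finset.sum_neg_distrib]
    linarith
  set bf : T → ℝ := fun t => max (g t / u) (Metric.infDist t J - 1) with hbf
  have hbc : Continuous bf := (hgc.div_const u).max
    ((Metric.continuous_infDist_pt J).sub continuous_const)
  set bhat : C(T, ℝ) := ⟨bf, hbc⟩ with hbhat
  have hbapp : ∀ t, bhat t = max (g t / u) (Metric.infDist t J - 1) := fun t => rfl
  have hbJ : ∀ t ∈ J, bhat t = -1 := by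
    intro t ht
    have h1 : Metric.infDist t J = 0 := Metric.infDist_zero_of_mem ht
    have h2 : g t / u ≤ -1 := by
      rw [div_le_iff₀ hu]; have := hg t ht; linarith
    rw [hbapp, h1]
    rw [max_eq_right (by linarith : g t / u ≤ (0:ℝ) - 1)]
    ring
  have hb_ge : ∀ t, -1 ≤ bhat t := by
    intro t
    have : (0:ℝ) ≤ Metric.infDist t J := Metric.infDist_nonneg
    rw [hbapp]
    calc (-1:ℝ) ≤ Metric.infDist t J - 1 := by linarith
    _ ≤ _ := le_max_right _ _
  have hb_mem : ∀ t, bhat t ≤ -1 → t ∈ J := by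
    intro t hle
    rw [hbapp] at hle
    have h2 : Metric.infDist t J - 1 ≤ -1 := (le_max_right _ _).trans hle
    have h3 : Metric.infDist t J = 0 :=
      le_antisymm (by linarith) Metric.infDist_nonneg
    exact (hJcp.isClosed.mem_iff_infDist_zero ⟨t₀, ht₀⟩).2 h3
  have hbdd : BddAbove (Set.range fun s : T => -(bhat s)) := by
    refine ⟨1, ?_⟩
    rintro _ ⟨s, rfl⟩
    have := hb_ge s
    simp only []
    linarith
  have hsup : (⨆ s : T, -(bhat s)) = 1 := by
    apply le_antisymm
    · apply ciSup_le
      intro s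
      have := hb_ge s
      linarith
    · have h1 : -(bhat t₀) = 1 := by rw [hbJ t₀ ht₀]; ring
      calc (1:ℝ) = -(bhat t₀) := h1.symm
      _ ≤ _ := le_ciSup hbdd t₀
  refine ⟨bhat, 0, ⟨fun i => y i / u, ?_⟩, ?_, ?_⟩
  · intro t
    have h1 : (∑ i, a t i * (y i / u)) = g t / u := by
      rw [hgdef]
      simp only []
      rw [Finset.sum_div]
      exact Finset.sum_congr rfl fun i _ => (mul_div_assoc _ _ _).symm
    rw [h1, hbapp]
    exact le_max_left _ _
  · intro hx
    have h1 := hx t₀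
    simp only [Pi.zero_apply, mul_zero, Finset.sum_const_zero] at h1
    rw [hbJ t₀ ht₀] at h1
    linarith
  · ext t
    simp only [Set.mem_setOf_eq, Pi.zero_apply, mul_zero, Finset.sum_const_zero, zero_sub]
    constructor
    · intro ht
      rw [hsup, hbJ t ht]; ring
    · intro h
      rw [hsup] at h
      exact hb_mem t (by linarith)
end

section
/- Let b̄ ∈ dom F. Then Hof F(b̄) = sup_{x ∈ F(b̄)} clm F(b̄,x) = sup_{x ∈ bd F(b̄)} clm F(b̄,x), where bd denotes the topological boundary (and sup ∅ := 0 covers the case F(b̄) = ℝⁿ). -/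
open Filter Set EMetric
open scoped Topology ENNReal NNReal

/-- Distance (in `[0,+∞]`, with `d(z,∅) = +∞`) from `z` to `S ⊆ ℝⁿ` with respect to the
norm `p` on `ℝⁿ`. -/
noncomputable def pDist {n : ℕ} (p : Seminorm ℝ (Fin n → ℝ))
    (z : Fin n → ℝ) (S : Set (Fin n → ℝ)) : ℝ≥0∞ :=
  ⨅ s ∈ S, ENNReal.ofReal (p (z - s))

/-- The calmness modulus of `F` at `(b̄, x̄)`, `x̄ ∈ F(b̄)`:
`clm F(b̄,x̄) = limsup_{(b,x) → (b̄,x̄), x ∈ F(b)} d(x, F(b̄)) / ‖b − b̄‖_∞`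
(`C(T,ℝ)` carries the sup metric; `d` is the distance associated with the norm `p` on `ℝⁿ`). -/
noncomputable def clmF {n : ℕ} {T : Type*} [TopologicalSpace T] [CompactSpace T]
    (a : T → (Fin n → ℝ)) (p : Seminorm ℝ (Fin n → ℝ))
    (bbar : C(T, ℝ)) (xbar : Fin n → ℝ) : ℝ≥0∞ :=
  Filter.limsup
    (fun q : C(T, ℝ) × (Fin n → ℝ) => pDist p q.2 (feas a bbar) / edist q.1 bbar)
    (𝓝 (bbar, xbar) ⊓ 𝓟 {q : C(T, ℝ) × (Fin n → ℝ) | q.2 ∈ feas a q.1})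

/-- The Hoffman modulus of `F` at `b̄ ∈ dom F`:
`Hof F(b̄) = sup_{x ∈ ℝⁿ} d(x, F(b̄)) / d(b̄, F⁻¹(x))`. -/
noncomputable def hofF {n : ℕ} {T : Type*} [TopologicalSpace T] [CompactSpace T]
    (a : T → (Fin n → ℝ)) (p : Seminorm ℝ (Fin n → ℝ)) (bbar : C(T, ℝ)) : ℝ≥0∞ :=
  ⨆ x : Fin n → ℝ, pDist p x (feas a bbar) / infEdist bbar {b : C(T, ℝ) | x ∈ feas a b}



lemma seminorm_sum_le {n : ℕ} {ι : Type*} (p : Seminorm ℝ (Fin n → ℝ)) (s : Finset ι)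
    (f : ι → (Fin n → ℝ)) : p (∑ i ∈ s, f i) ≤ ∑ i ∈ s, p (f i) := by
  classical
  induction s using Finset.induction with
  | empty => simp
  | insert _ _ h ih =>
    rw [Finset.sum_insert h, Finset.sum_insert h]
    exact le_trans (map_add_le_add p _ _) (by linarith)

lemma pnorm_upper {n : ℕ} (p : Seminorm ℝ (Fin n → ℝ)) :
    ∃ C : ℝ, 0 ≤ C ∧ ∀ x, p x ≤ C * ‖x‖ := by
  refine ⟨∑ i, p (Pi.single i 1), Finset.sum_nonneg fun i _ => apply_nonneg p _, fun x => ?_⟩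
  have hx : x = ∑ i, x i • (Pi.single i (1:ℝ) : Fin n → ℝ) := by
    ext j; simp [Pi.single_apply]
  calc p x = p (∑ i, x i • (Pi.single i (1:ℝ) : Fin n → ℝ)) := by rw [← hx]
    _ ≤ ∑ i, p (x i • (Pi.single i (1:ℝ) : Fin n → ℝ)) := seminorm_sum_le p _ _
    _ ≤ ∑ i, ‖x‖ * p (Pi.single i (1:ℝ) : Fin n → ℝ) := by
        refine Finset.sum_le_sum fun i _ => ?_
        rw [map_smul_eq_mul]
        exact mul_le_mul_of_nonneg_right (by
          simpa using norm_le_pi_norm x i) (apply_nonneg p _)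
    _ = (∑ i, p (Pi.single i 1)) * ‖x‖ := by rw [← Finset.mul_sum, mul_comm]

lemma pnorm_continuous {n : ℕ} (p : Seminorm ℝ (Fin n → ℝ)) : Continuous p := by
  obtain ⟨C, hC0, hC⟩ := pnorm_upper p
  rw [Metric.continuous_iff]
  intro x ε hε
  rcases eq_or_lt_of_le hC0 with h0 | hCpos
  · refine ⟨1, one_pos, fun y _ => ?_⟩
    have h1 : p y = 0 := le_antisymm (by simpa [← h0] using hC y) (apply_nonneg p y)
    have h2 : p x = 0 := le_antisymm (by simpa [← h0] using hC x) (apply_nonneg p x)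
    simpa [Real.dist_eq, h1, h2] using hε
  · refine ⟨ε / C, by positivity, fun y hy => ?_⟩
    have h1 : |p y - p x| ≤ p (y - x) := abs_sub_map_le_sub p y x
    have h2 : p (y - x) ≤ C * ‖y - x‖ := hC _
    have h3 : ‖y - x‖ < ε / C := by rwa [← dist_eq_norm]
    calc dist (p y) (p x) = |p y - p x| := Real.dist_eq _ _
      _ ≤ C * ‖y - x‖ := h1.trans h2
      _ < C * (ε / C) := by exact mul_lt_mul_of_pos_left h3 hCpos
      _ = ε := by field_simp

lemma pnorm_lower {n : ℕ} (p : Seminorm ℝ (Fin n → ℝ)) (hp : ∀ x, p x = 0 → x = 0) :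
    ∃ c : ℝ, 0 < c ∧ ∀ x, c * ‖x‖ ≤ p x := by
  rcases Nat.eq_zero_or_pos n with hn | hn
  · refine ⟨1, one_pos, fun x => ?_⟩
    have : x = 0 := by subst hn; ext i; exact absurd i.2 (by omega)
    simp [this]
  · have hsph : IsCompact (Metric.sphere (0 : Fin n → ℝ) 1) := isCompact_sphere _ _
    haveI : Nonempty (Fin n) := Fin.pos_iff_nonempty.1 hn
    haveI : Nontrivial (Fin n → ℝ) := ⟨0, Pi.single ⟨0, hn⟩ 1, by
      intro h
      have := congrFun h ⟨0, hn⟩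
      simp [Pi.single_apply] at this⟩
    have hne : (Metric.sphere (0 : Fin n → ℝ) 1).Nonempty := by
      exact NormedSpace.sphere_nonempty.2 zero_le_one
    obtain ⟨z, hz, hzmin⟩ := hsph.exists_isMinOn hne (pnorm_continuous p).continuousOn
    have hz1 : ‖z‖ = 1 := by simpa using hz
    have hzpos : 0 < p z := by
      rcases (apply_nonneg p z).lt_or_eq with h | h
      · exact h
      · exfalso; have := hp z h.symm; rw [this] at hz1; simp at hz1
    refine ⟨p z, hzpos, fun x => ?_⟩
    rcases eq_or_ne x 0 with rfl | hx
    · simp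
    · have hxn : ‖x‖ ≠ 0 := norm_ne_zero_iff.2 hx
      have hmem : (‖x‖⁻¹ • x) ∈ Metric.sphere (0 : Fin n → ℝ) 1 := by
        simp [norm_smul, abs_of_nonneg (inv_nonneg.2 (norm_nonneg x)), inv_mul_cancel₀ hxn]
      have this1 : p z ≤ p (‖x‖⁻¹ • x) := hzmin hmem
      have h2 : p (‖x‖⁻¹ • x) = ‖x‖⁻¹ * p x := by
        rw [map_smul_eq_mul]; congr 1; exact abs_of_nonneg (inv_nonneg.2 (norm_nonneg x))
      rw [h2] at this1
      have hxpos : 0 < ‖x‖ := (norm_nonneg x).lt_of_ne (Ne.symm hxn)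
      calc p z * ‖x‖ ≤ (‖x‖⁻¹ * p x) * ‖x‖ := mul_le_mul_of_nonneg_right this1 hxpos.le
        _ = p x := by field_simp



lemma exists_nearest {n : ℕ} (p : Seminorm ℝ (Fin n → ℝ)) (hp : ∀ x, p x = 0 → x = 0)
    {S : Set (Fin n → ℝ)} (hS : IsClosed S) (hne : S.Nonempty) (x : Fin n → ℝ) :
    ∃ y ∈ S, ∀ s ∈ S, p (x - y) ≤ p (x - s) := by
  obtain ⟨c, hc, hcl⟩ := pnorm_lower p hp
  obtain ⟨s₀, hs₀⟩ := hne
  set g : (Fin n → ℝ) → ℝ := fun s => p (x - s) with hg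
  have hgc : Continuous g := (pnorm_continuous p).comp (continuous_const.sub continuous_id)
  set K : Set (Fin n → ℝ) := S ∩ {s | g s ≤ g s₀} with hK
  have hKc : IsCompact K := by
    rw [Metric.isCompact_iff_isClosed_bounded]
    constructor
    · exact hS.inter (isClosed_le hgc continuous_const)
    · refine (Metric.isBounded_closedBall (x := (0 : Fin n → ℝ))
        (r := ‖x‖ + g s₀ / c)).subset ?_
      rintro s ⟨-, hs2⟩
      have h1 : c * ‖x - s‖ ≤ g s₀ := (hcl (x - s)).trans hs2
      have h2 : ‖x - s‖ ≤ g s₀ / c := by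
        rw [le_div_iff₀ hc]; linarith [h1, mul_comm c ‖x - s‖]
      have : ‖s‖ ≤ ‖x‖ + ‖x - s‖ := by
        calc ‖s‖ = ‖x - (x - s)‖ := by ring_nf
          _ ≤ ‖x‖ + ‖x - s‖ := norm_sub_le _ _
      simp only [Metric.mem_closedBall, dist_zero_right]
      linarith
  have hKne : K.Nonempty := ⟨s₀, hs₀, by simp⟩
  obtain ⟨y, hy, hymin⟩ := hKc.exists_isMinOn hKne hgc.continuousOn
  refine ⟨y, hy.1, fun s hs => ?_⟩
  by_cases hsK : s ∈ K
  · exact hymin hsK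
  · have h1 : g s₀ < g s := by
      by_contra h
      exact hsK ⟨hs, not_lt.1 h⟩
    have h2 : g y ≤ g s₀ := hymin ⟨hs₀, by simp⟩
    exact le_of_lt (lt_of_le_of_lt h2 h1)

lemma pDist_eq_of_min {n : ℕ} (p : Seminorm ℝ (Fin n → ℝ)) {S : Set (Fin n → ℝ)}
    {x y : Fin n → ℝ} (hy : y ∈ S) (hmin : ∀ s ∈ S, p (x - y) ≤ p (x - s)) :
    pDist p x S = ENNReal.ofReal (p (x - y)) := by
  refine le_antisymm ?_ ?_
  · exact iInf₂_le y hy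
  · exact le_iInf₂ fun s hs => ENNReal.ofReal_le_ofReal (hmin s hs)

lemma pDist_zero_of_mem {n : ℕ} (p : Seminorm ℝ (Fin n → ℝ)) {S : Set (Fin n → ℝ)}
    {x : Fin n → ℝ} (hx : x ∈ S) : pDist p x S = 0 :=
  le_antisymm ((iInf₂_le x hx).trans (by simp)) zero_le

lemma feas_isClosed {n : ℕ} {T : Type*} [TopologicalSpace T]
    (a : T → (Fin n → ℝ)) (b : C(T, ℝ)) : IsClosed (feas a b) := by
  have : feas a b = ⋂ t, {x : Fin n → ℝ | ∑ i, a t i * x i ≤ b t} := by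
    ext x; simp [feas, Set.mem_iInter]
  rw [this]
  refine isClosed_iInter fun t => isClosed_le ?_ continuous_const
  exact continuous_finset_sum _ fun i _ => continuous_const.mul (continuous_apply i)

lemma dist_add_const {T : Type*} [MetricSpace T] [CompactSpace T] [Nonempty T]
    (bbar : C(T, ℝ)) (c : ℝ) (hc : 0 ≤ c) :
    dist (bbar + ContinuousMap.const T c) bbar = c := by
  refine le_antisymm ?_ ?_
  · rw [ContinuousMap.dist_le_iff_of_nonempty]
    intro t
    simp [Real.dist_eq, abs_of_nonneg hc]
  · obtain ⟨t⟩ := ‹Nonempty T›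
    have := ContinuousMap.dist_apply_le_dist (f := bbar + ContinuousMap.const T c)
      (g := bbar) t
    simpa [Real.dist_eq, abs_of_nonneg hc] using this

/-- residual formula for the inverse image distance -/
lemma infEdist_residual {n : ℕ} {T : Type*} [MetricSpace T] [CompactSpace T] [Nonempty T]
    (a : T → (Fin n → ℝ)) (ha : Continuous a) (bbar : C(T, ℝ)) (x : Fin n → ℝ)
    {t₀ : T} (ht₀ : ∀ t, (∑ i, a t i * x i) - bbar t ≤ (∑ i, a t₀ i * x i) - bbar t₀) :
    infEdist bbar {b : C(T, ℝ) | x ∈ feas a b}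
      = ENNReal.ofReal (max 0 ((∑ i, a t₀ i * x i) - bbar t₀)) := by
  set c : ℝ := max 0 ((∑ i, a t₀ i * x i) - bbar t₀) with hcdef
  have hc0 : 0 ≤ c := le_max_left _ _
  refine le_antisymm ?_ ?_
  · have hmem : (bbar + ContinuousMap.const T c) ∈ {b : C(T, ℝ) | x ∈ feas a b} := by
      intro t
      have h1 : (∑ i, a t i * x i) - bbar t ≤ c := (ht₀ t).trans (le_max_right _ _)
      have : (bbar + ContinuousMap.const T c) t = bbar t + c := by simp
      rw [this]; linarith
    refine (infEdist_le_edist_of_mem hmem).trans ?_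
    rw [edist_dist, dist_comm, dist_add_const bbar c hc0]
  · refine le_infEdist.2 ?_
    intro b hb
    rw [edist_dist]
    refine ENNReal.ofReal_le_ofReal ?_
    refine max_le dist_nonneg ?_
    have h1 : (∑ i, a t₀ i * x i) ≤ b t₀ := hb t₀
    have h2 : |b t₀ - bbar t₀| ≤ dist bbar b := by
      rw [dist_comm]
      simpa [Real.dist_eq] using ContinuousMap.dist_apply_le_dist (f := b) (g := bbar) t₀
    calc (∑ i, a t₀ i * x i) - bbar t₀ ≤ b t₀ - bbar t₀ := by linarith
      _ ≤ |b t₀ - bbar t₀| := le_abs_self _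
      _ ≤ dist bbar b := h2

/-- formula (eq_h_Cal). For `b̄ ∈ dom F`,
`Hof F(b̄) = sup_{x ∈ F(b̄)} clm F(b̄,x) = sup_{x ∈ bd F(b̄)} clm F(b̄,x)`
(`bd` the topological boundary; `sup ∅ = 0` covers `F(b̄) = ℝⁿ`). -/
theorem hofF_eq_sup_clm_eq_sup_clm_boundary
    {n : ℕ} {T : Type*} [MetricSpace T] [CompactSpace T]
    (a : T → (Fin n → ℝ)) (ha : Continuous a)
    (p : Seminorm ℝ (Fin n → ℝ)) (hp : ∀ x, p x = 0 → x = 0)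
    (bbar : C(T, ℝ)) (hdom : (feas a bbar).Nonempty) :
    hofF a p bbar = (⨆ x ∈ feas a bbar, clmF a p bbar x) ∧
    hofF a p bbar = (⨆ x ∈ frontier (feas a bbar), clmF a p bbar x) := by
  classical
  have hFclosed : IsClosed (feas a bbar) := feas_isClosed a bbar
  -- frontier sup ≤ feasible sup
  have hle1 : (⨆ x ∈ frontier (feas a bbar), clmF a p bbar x)
      ≤ ⨆ x ∈ feas a bbar, clmF a p bbar x := by
    refine iSup₂_le fun x hx => le_iSup₂ (f := fun x _ => clmF a p bbar x) x
      (hFclosed.frontier_subset hx)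
  -- feasible sup ≤ hofF
  have hle2 : (⨆ x ∈ feas a bbar, clmF a p bbar x) ≤ hofF a p bbar := by
    refine iSup₂_le fun x _ => ?_
    refine Filter.limsup_le_of_le (by isBoundedDefault) ?_
    have hev : ∀ᶠ q : C(T, ℝ) × (Fin n → ℝ) in
        (𝓝 (bbar, x) ⊓ 𝓟 {q : C(T, ℝ) × (Fin n → ℝ) | q.2 ∈ feas a q.1}),
        q.2 ∈ feas a q.1 :=
      eventually_inf_principal.2 (Eventually.of_forall fun q hq => hq)
    refine hev.mono fun q hq => ?_
    calc pDist p q.2 (feas a bbar) / edist q.1 bbar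
        ≤ pDist p q.2 (feas a bbar) / infEdist bbar {b : C(T, ℝ) | q.2 ∈ feas a b} := by
          refine ENNReal.div_le_div_left ?_ _
          rw [edist_comm]
          exact infEdist_le_edist_of_mem hq
      _ ≤ hofF a p bbar := le_iSup
          (fun z => pDist p z (feas a bbar) / infEdist bbar {b : C(T, ℝ) | z ∈ feas a b}) q.2
  -- hofF ≤ frontier sup
  have hle3 : hofF a p bbar ≤ ⨆ x ∈ frontier (feas a bbar), clmF a p bbar x := by
    rcases isEmpty_or_nonempty T with hT | hT
    · refine iSup_le fun x => ?_
      have hxF : x ∈ feas a bbar := fun t => isEmptyElim t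
      rw [pDist_zero_of_mem p hxF, ENNReal.zero_div]
      exact zero_le
    · refine iSup_le fun x => ?_
      by_cases hxF : x ∈ feas a bbar
      · rw [pDist_zero_of_mem p hxF, ENNReal.zero_div]; exact zero_le
      -- main argument
      -- maximizing t₀ for the residual
      have hgcont : Continuous (fun t : T => (∑ i, a t i * x i) - bbar t) := by
        refine Continuous.sub ?_ bbar.continuous
        exact continuous_finset_sum _ fun i _ =>
          (((continuous_apply i).comp ha).mul continuous_const)
      obtain ⟨t₀, ht₀⟩ := hgcont.exists_forall_ge (by rw [Filter.cocompact_eq_bot]; exact tendsto_bot)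
      set f : ℝ := (∑ i, a t₀ i * x i) - bbar t₀ with hfdef
      have hfpos : 0 < f := by
        rw [feas, Set.mem_setOf_eq, not_forall] at hxF
        obtain ⟨t, ht⟩ := hxF
        have := ht₀ t
        push_neg at ht
        linarith
      have hden : infEdist bbar {b : C(T, ℝ) | x ∈ feas a b} = ENNReal.ofReal f := by
        rw [infEdist_residual a ha bbar x ht₀, max_eq_right hfpos.le]
      -- nearest point
      obtain ⟨y, hyF, hymin⟩ := exists_nearest p hp hFclosed hdom x
      set d : ℝ := p (x - y) with hddef
      have hd0 : 0 < d := by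
        rcases (apply_nonneg p (x - y)).lt_or_eq with h | h
        · exact h
        · exfalso
          have := hp _ h.symm
          have hxy : x = y := by
            have := sub_eq_zero.mp this; exact this
          exact hxF (hxy ▸ hyF)
      have hnum : pDist p x (feas a bbar) = ENNReal.ofReal d :=
        pDist_eq_of_min p hyF hymin
      -- the path
      set xl : ℝ → (Fin n → ℝ) := fun l => y + l • (x - y) with hxl
      set bl : ℝ → C(T, ℝ) := fun l => bbar + ContinuousMap.const T (l * f) with hbl
      -- feasibility along the path
      have hfeas : ∀ l ∈ Ioo (0:ℝ) 1, xl l ∈ feas a (bl l) := by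
        intro l hl t
        have hterm : ∀ i : Fin n, a t i * (xl l) i
            = a t i * y i + l * (a t i * x i - a t i * y i) := by
          intro i
          simp only [hxl, Pi.add_apply, Pi.smul_apply, Pi.sub_apply, smul_eq_mul]
          ring
        have hsum : (∑ i, a t i * (xl l) i)
            = (∑ i, a t i * y i) + l * ((∑ i, a t i * x i) - (∑ i, a t i * y i)) := by
          calc (∑ i, a t i * (xl l) i)
              = ∑ i, (a t i * y i + l * (a t i * x i - a t i * y i)) :=
                Finset.sum_congr rfl fun i _ => hterm i
            _ = (∑ i, a t i * y i) + l * ((∑ i, a t i * x i) - (∑ i, a t i * y i)) := by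
                rw [Finset.sum_add_distrib, ← Finset.mul_sum, Finset.sum_sub_distrib]
        have h1 : (∑ i, a t i * y i) ≤ bbar t := hyF t
        have h2 : (∑ i, a t i * x i) - bbar t ≤ f := ht₀ t
        have hblv : (bl l) t = bbar t + l * f := by simp [hbl]
        rw [hblv, hsum]
        nlinarith [hl.1.le, hl.2.le, sub_nonneg.mpr hl.2.le]
      -- distance of bl l to bbar
      have hedist : ∀ l ∈ Ioo (0:ℝ) 1, edist (bl l) bbar = ENNReal.ofReal (l * f) := by
        intro l hl
        rw [edist_dist]
        congr 1
        exact dist_add_const bbar (l * f) (mul_nonneg hl.1.le hfpos.le)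
      -- pDist along the path
      have hpdist : ∀ l ∈ Ioo (0:ℝ) 1, pDist p (xl l) (feas a bbar)
          = ENNReal.ofReal (l * d) := by
        intro l hl
        have hsub : xl l - y = l • (x - y) := by
          simp [hxl]
        have hval : p (xl l - y) = l * d := by
          rw [hsub, map_smul_eq_mul, Real.norm_eq_abs, abs_of_pos hl.1]
        have hlow : ∀ s ∈ feas a bbar, l * d ≤ p (xl l - s) := by
          intro s hs
          have h1 : d ≤ p (x - s) := hymin s hs
          have h2 : x - xl l = (1 - l) • (x - y) := by
            simp only [hxl]
            ext i
            simp only [Pi.sub_apply, Pi.add_apply, Pi.smul_apply, smul_eq_mul]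
            ring
          have h3 : p (x - xl l) = (1 - l) * d := by
            rw [h2, map_smul_eq_mul, Real.norm_eq_abs, abs_of_pos (sub_pos.mpr hl.2)]
          have h4 : p (x - s) ≤ p (x - xl l) + p (xl l - s) := by
            have : x - s = (x - xl l) + (xl l - s) := by abel
            rw [this]; exact map_add_le_add p _ _
          nlinarith
        refine le_antisymm ?_ ?_
        · exact (iInf₂_le y hyF).trans (by rw [hval])
        · exact le_iInf₂ fun s hs => ENNReal.ofReal_le_ofReal (hlow s hs)
      -- y ∈ frontier
      have htendx : Tendsto xl (𝓝[>] (0:ℝ)) (𝓝 y) := by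
        have hc : Continuous xl := continuous_const.add (continuous_id.smul continuous_const)
        have := hc.tendsto' 0 y (by simp [hxl])
        exact this.mono_left nhdsWithin_le_nhds
      have hIoo : Ioo (0:ℝ) 1 ∈ 𝓝[>] (0:ℝ) := Ioo_mem_nhdsGT_of_mem ⟨le_refl 0, one_pos⟩
      have hxlnot : ∀ l ∈ Ioo (0:ℝ) 1, xl l ∉ feas a bbar := by
        intro l hl hmem
        have := pDist_zero_of_mem p hmem
        rw [hpdist l hl] at this
        have : l * d ≤ 0 := by
          by_contra h
          push_neg at h
          exact (ENNReal.ofReal_pos.mpr h).ne' this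
        nlinarith [hl.1, hd0]
      have hyfr : y ∈ frontier (feas a bbar) := by
        rw [frontier_eq_closure_inter_closure]
        refine ⟨subset_closure hyF, ?_⟩
        refine mem_closure_of_tendsto htendx ?_
        filter_upwards [hIoo] with l hl
        exact hxlnot l hl
      -- tendsto of the path into the calmness filter
      have htendb : Tendsto bl (𝓝[>] (0:ℝ)) (𝓝 bbar) := by
        have hc : Continuous bl := by
          refine continuous_const.add ?_
          exact ContinuousMap.continuous_const'.comp (continuous_id.mul continuous_const)
        have := hc.tendsto' 0 bbar (by ext t; simp [hbl])
        exact this.mono_left nhdsWithin_le_nhds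
      set m : ℝ → C(T, ℝ) × (Fin n → ℝ) := fun l => (bl l, xl l) with hm
      have htend : Tendsto m (𝓝[>] (0:ℝ))
          ((𝓝 (bbar, y)) ⊓ 𝓟 {q : C(T, ℝ) × (Fin n → ℝ) | q.2 ∈ feas a q.1}) := by
        refine tendsto_inf.2 ⟨?_, ?_⟩
        · rw [nhds_prod_eq]
          exact htendb.prodMk htendx
        · rw [tendsto_principal]
          filter_upwards [hIoo] with l hl
          exact hfeas l hl
      -- the ratio is constant along the path
      set u : C(T, ℝ) × (Fin n → ℝ) → ℝ≥0∞ :=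
        fun q => pDist p q.2 (feas a bbar) / edist q.1 bbar with hu
      have hconst : ∀ᶠ l in 𝓝[>] (0:ℝ), (u ∘ m) l
          = ENNReal.ofReal d / ENNReal.ofReal f := by
        filter_upwards [hIoo] with l hl
        have : (u ∘ m) l = ENNReal.ofReal (l * d) / ENNReal.ofReal (l * f) := by
          simp only [Function.comp_apply, hu, hm]
          rw [hpdist l hl, hedist l hl]
        rw [this, ENNReal.ofReal_mul hl.1.le, ENNReal.ofReal_mul hl.1.le,
          ENNReal.mul_div_mul_left _ _ (by simpa using hl.1) ENNReal.ofReal_ne_top]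
      -- conclude
      have hkey : ENNReal.ofReal d / ENNReal.ofReal f ≤ clmF a p bbar y := by
        have h1 : ENNReal.ofReal d / ENNReal.ofReal f = Filter.limsup (u ∘ m) (𝓝[>] (0:ℝ)) := by
          rw [Filter.limsup_congr hconst, Filter.limsup_const]
        rw [h1, Filter.limsup_comp]
        exact Filter.limsup_le_limsup_of_le htend
      calc pDist p x (feas a bbar) / infEdist bbar {b : C(T, ℝ) | x ∈ feas a b}
          = ENNReal.ofReal d / ENNReal.ofReal f := by rw [hnum, hden]
        _ ≤ clmF a p bbar y := hkey
        _ ≤ ⨆ x ∈ frontier (feas a bbar), clmF a p bbar x :=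
            le_iSup₂ (f := fun x _ => clmF a p bbar x) y hyfr
  have he1 : hofF a p bbar = ⨆ x ∈ feas a bbar, clmF a p bbar x :=
    le_antisymm (hle3.trans hle1) hle2
  exact ⟨he1, le_antisymm hle3 (hle1.trans hle2)⟩
end

section
/- Let b̄ ∈ dom F. The following conditions are equivalent: (i) D(F(b̄),x̄) = A(x̄)° for every x̄ ∈ F(b̄); (ii) for every x̄ ∈ F(b̄) there exists a neighborhood W of x̄ such that F(b̄) ∩ W = (x̄ + A(x̄)°) ∩ W. -/
open Filter Set
open scoped Topology

/-- The set of active indices `T(x) = {t ∈ T : a_t'x = b̄_t}` at a point `x`. -/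
def activeIdx {n : ℕ} {T : Type*} [TopologicalSpace T]
    (a : T → (Fin n → ℝ)) (bbar : C(T, ℝ)) (x : Fin n → ℝ) : Set T :=
  {t : T | (∑ i, a t i * x i) = bbar t}

/-- The convex conical hull `cone S` (containing `0ₙ`). -/
def coneHull {n : ℕ} (S : Set (Fin n → ℝ)) : Set (Fin n → ℝ) :=
  insert 0 {x | ∃ c : ℝ, 0 ≤ c ∧ ∃ y ∈ convexHull ℝ S, x = c • y}

/-- The negative polar `K° = {u : k'u ≤ 0 for all k ∈ K}`. -/
def negPolar {n : ℕ} (K : Set (Fin n → ℝ)) : Set (Fin n → ℝ) :=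
  {u | ∀ k ∈ K, (∑ i, k i * u i) ≤ 0}

/-- The cone of feasible directions of `F(b̄)` at `x`:
`{d : ∃ ε > 0, x + α·d ∈ F(b̄) for all α ∈ [0, ε]}`. -/
def feasDirs {n : ℕ} {T : Type*} [TopologicalSpace T]
    (a : T → (Fin n → ℝ)) (bbar : C(T, ℝ)) (x : Fin n → ℝ) : Set (Fin n → ℝ) :=
  {d | ∃ ε : ℝ, 0 < ε ∧ ∀ α ∈ Set.Icc (0 : ℝ) ε, x + α • d ∈ feas a bbar}

/-! ### Sum manipulation helpers -/

section Helpers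
variable {n : ℕ}

theorem sum_mul_add_smul (w x y : Fin n → ℝ) (c : ℝ) :
    (∑ i, w i * (x + c • y) i) = (∑ i, w i * x i) + c * (∑ i, w i * y i) := by
  rw [Finset.mul_sum, ← Finset.sum_add_distrib]
  refine Finset.sum_congr rfl fun i _ => ?_
  simp only [Pi.add_apply, Pi.smul_apply, smul_eq_mul]
  ring

theorem sum_mul_smul (w y : Fin n → ℝ) (c : ℝ) :
    (∑ i, w i * (c • y) i) = c * (∑ i, w i * y i) := by
  rw [Finset.mul_sum]
  refine Finset.sum_congr rfl fun i _ => ?_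
  simp only [Pi.smul_apply, smul_eq_mul]
  ring

theorem sum_mul_sub_smul (w x y : Fin n → ℝ) (c : ℝ) :
    (∑ i, w i * (x - c • y) i) = (∑ i, w i * x i) - c * (∑ i, w i * y i) := by
  rw [Finset.mul_sum, ← Finset.sum_sub_distrib]
  refine Finset.sum_congr rfl fun i _ => ?_
  simp only [Pi.sub_apply, Pi.smul_apply, smul_eq_mul]
  ring

theorem sum_neg_mul_left (y d : Fin n → ℝ) :
    (∑ i, (-y) i * d i) = -(∑ i, y i * d i) := by
  rw [← Finset.sum_neg_distrib]
  refine Finset.sum_congr rfl fun i _ => ?_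
  simp

theorem sum_mul_sub_right (w x y : Fin n → ℝ) :
    (∑ i, w i * (x - y) i) = (∑ i, w i * x i) - (∑ i, w i * y i) := by
  rw [← Finset.sum_sub_distrib]
  refine Finset.sum_congr rfl fun i _ => ?_
  simp only [Pi.sub_apply]
  ring

/-- `negPolar` of the conical hull is `negPolar` of the set. -/
theorem negPolar_coneHull (S : Set (Fin n → ℝ)) : negPolar (coneHull S) = negPolar S := by
  apply Set.Subset.antisymm
  · intro u hu k hk
    exact hu k (Or.inr ⟨1, zero_le_one, k, subset_convexHull ℝ S hk, (one_smul ℝ k).symm⟩)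
  · intro u hu k hk
    have hhull : ∀ y ∈ convexHull ℝ S, (∑ i, y i * u i) ≤ 0 := by
      intro y hy
      have hconv : Convex ℝ {y : Fin n → ℝ | (∑ i, y i * u i) ≤ 0} := by
        intro p hp q hq α β hα hβ hαβ
        simp only [Set.mem_setOf_eq] at hp hq ⊢
        have hexp : (∑ i, (α • p + β • q) i * u i)
            = α * (∑ i, p i * u i) + β * (∑ i, q i * u i) := by
          rw [Finset.mul_sum, Finset.mul_sum, ← Finset.sum_add_distrib]
          refine Finset.sum_congr rfl fun i _ => ?_
          simp only [Pi.add_apply, Pi.smul_apply, smul_eq_mul]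
          ring
        rw [hexp]
        exact add_nonpos (mul_nonpos_of_nonneg_of_nonpos hα hp)
          (mul_nonpos_of_nonneg_of_nonpos hβ hq)
      exact convexHull_min hu hconv hy
    rcases hk with hk | ⟨c, hc, y, hy, rfl⟩
    · subst hk; simp
    · have hexp : (∑ i, (c • y) i * u i) = c * (∑ i, y i * u i) := by
        rw [Finset.mul_sum]
        refine Finset.sum_congr rfl fun i _ => ?_
        simp only [Pi.smul_apply, smul_eq_mul]
        ring
      rw [hexp]
      exact mul_nonpos_of_nonneg_of_nonpos hc (hhull y hy)

theorem smul_mem_negPolar {K : Set (Fin n → ℝ)} {u : Fin n → ℝ}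
    (hu : u ∈ negPolar K) {α : ℝ} (hα : 0 ≤ α) : α • u ∈ negPolar K := by
  intro k hk
  rw [sum_mul_smul]
  exact mul_nonpos_of_nonneg_of_nonpos hα (hu k hk)

end Helpers

/-! ### Basic feasible set facts -/

section FeasBasic
variable {n : ℕ} {T : Type*} [TopologicalSpace T]

theorem feas_convex (a : T → (Fin n → ℝ)) (b : C(T, ℝ)) : Convex ℝ (feas a b) := by
  intro x hx y hy α β hα hβ hab t
  have hexp : (∑ i, a t i * (α • x + β • y) i)
      = α * (∑ i, a t i * x i) + β * (∑ i, a t i * y i) := by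
    rw [Finset.mul_sum, Finset.mul_sum, ← Finset.sum_add_distrib]
    refine Finset.sum_congr rfl fun i _ => ?_
    simp only [Pi.add_apply, Pi.smul_apply, smul_eq_mul]
    ring
  rw [hexp]
  calc α * (∑ i, a t i * x i) + β * (∑ i, a t i * y i)
      ≤ α * b t + β * b t :=
        add_le_add (mul_le_mul_of_nonneg_left (hx t) hα) (mul_le_mul_of_nonneg_left (hy t) hβ)
    _ = b t := by rw [← add_mul, hab, one_mul]

theorem sub_mem_feasDirs (a : T → (Fin n → ℝ)) (b : C(T, ℝ)) {xbar y : Fin n → ℝ}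
    (hx : xbar ∈ feas a b) (hy : y ∈ feas a b) :
    y - xbar ∈ feasDirs a b xbar := by
  refine ⟨1, one_pos, ?_⟩
  intro α ⟨hα0, hα1⟩
  have heq : xbar + α • (y - xbar) = (1 - α) • xbar + α • y := by
    ext i
    simp only [Pi.add_apply, Pi.smul_apply, Pi.sub_apply, smul_eq_mul]
    ring
  rw [heq]
  exact feas_convex a b hx hy (by linarith) hα0 (by ring)

theorem feasDirs_subset_negPolar (a : T → (Fin n → ℝ)) (bbar : C(T, ℝ)) (xbar : Fin n → ℝ) :
    feasDirs a bbar xbar ⊆ negPolar (coneHull (a '' activeIdx a bbar xbar)) := by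
  rw [negPolar_coneHull]
  rintro d ⟨ε, hε, hf⟩ w ⟨t, ht, rfl⟩
  have hfe := hf ε ⟨le_of_lt hε, le_refl ε⟩ t
  rw [sum_mul_add_smul, ht] at hfe
  have h2 : ε * (∑ i, a t i * d i) ≤ 0 := by linarith
  nlinarith [h2, hε]

end FeasBasic

/-! ### The sliced system -/

section Slice
variable {n : ℕ} {T : Type*} [TopologicalSpace T]

/-- Gradients of the sliced system: original gradients plus `±e`. -/
def sliceA (a : T → (Fin n → ℝ)) (e : Fin n → ℝ) : T ⊕ Bool → (Fin n → ℝ) :=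
  Sum.elim a (fun bb => if bb then e else -e)

/-- Right-hand sides of the sliced system: original plus `±⟨e, Z⟩`. -/
def sliceB (b : C(T, ℝ)) (e Z : Fin n → ℝ) : C(T ⊕ Bool, ℝ) :=
  ⟨Sum.elim (fun t => b t) (fun bb => if bb then (∑ i, e i * Z i) else -(∑ i, e i * Z i)),
    Continuous.sumElim b.continuous (continuous_of_discreteTopology)⟩

theorem mem_feas_slice_iff (a : T → (Fin n → ℝ)) (b : C(T, ℝ)) (e Z x : Fin n → ℝ) :
    x ∈ feas (sliceA a e) (sliceB b e Z) ↔
      x ∈ feas a b ∧ (∑ i, e i * x i) = (∑ i, e i * Z i) := by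
  constructor
  · intro hx
    refine ⟨fun t => hx (Sum.inl t), le_antisymm (hx (Sum.inr true)) ?_⟩
    have h2 := hx (Sum.inr false)
    simp only [sliceA, sliceB, Sum.elim_inr, ContinuousMap.coe_mk, Bool.false_eq_true, if_false, eq_self_iff_true, if_true] at h2
    rw [sum_neg_mul_left] at h2
    linarith
  · rintro ⟨hx, hxe⟩ t
    rcases t with t | bb
    · exact hx t
    · rcases bb with _ | _
      · simp only [sliceA, sliceB, Sum.elim_inr, ContinuousMap.coe_mk, Bool.false_eq_true, if_false, eq_self_iff_true, if_true]
        rw [sum_neg_mul_left, hxe]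
      · simp only [sliceA, sliceB, Sum.elim_inr, ContinuousMap.coe_mk, Bool.false_eq_true, if_false, eq_self_iff_true, if_true]
        rw [hxe]

theorem active_slice_inl {a : T → (Fin n → ℝ)} {b : C(T, ℝ)} {e Z y : Fin n → ℝ} {t : T} :
    Sum.inl t ∈ activeIdx (sliceA a e) (sliceB b e Z) y ↔ t ∈ activeIdx a b y := by
  simp [activeIdx, sliceA, sliceB]

end Slice

section SliceH
variable {n : ℕ} {T : Type*} [TopologicalSpace T]

theorem feasDirs_slice (a : T → (Fin n → ℝ)) (b : C(T, ℝ)) {e Z y : Fin n → ℝ}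
    (hy : y ∈ feas (sliceA a e) (sliceB b e Z)) :
    feasDirs (sliceA a e) (sliceB b e Z) y
      = feasDirs a b y ∩ {d | (∑ i, e i * d i) = 0} := by
  obtain ⟨hyf, hye⟩ := (mem_feas_slice_iff a b e Z y).mp hy
  apply Set.Subset.antisymm
  · rintro d ⟨ε, hε, hf⟩
    have hεm := (mem_feas_slice_iff a b e Z _).mp (hf ε ⟨le_of_lt hε, le_refl ε⟩)
    constructor
    · exact ⟨ε, hε, fun α hα => ((mem_feas_slice_iff a b e Z _).mp (hf α hα)).1⟩
    · have h2 := hεm.2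
      rw [sum_mul_add_smul, hye] at h2
      have : ε * (∑ i, e i * d i) = 0 := by linarith
      simp only [Set.mem_setOf_eq]
      rcases mul_eq_zero.mp this with h | h
      · exact absurd h (ne_of_gt hε)
      · exact h
  · rintro d ⟨⟨ε, hε, hf⟩, hd⟩
    simp only [Set.mem_setOf_eq] at hd
    refine ⟨ε, hε, fun α hα => ?_⟩
    rw [mem_feas_slice_iff]
    refine ⟨hf α hα, ?_⟩
    rw [sum_mul_add_smul, hye, hd, mul_zero, add_zero]

theorem negPolar_slice_active (a : T → (Fin n → ℝ)) (b : C(T, ℝ)) {e Z y : Fin n → ℝ}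
    (hy : y ∈ feas (sliceA a e) (sliceB b e Z)) :
    negPolar ((sliceA a e) '' activeIdx (sliceA a e) (sliceB b e Z) y)
      = negPolar (a '' activeIdx a b y) ∩ {d | (∑ i, e i * d i) = 0} := by
  obtain ⟨hyf, hye⟩ := (mem_feas_slice_iff a b e Z y).mp hy
  have hitrue : (Sum.inr true) ∈ activeIdx (sliceA a e) (sliceB b e Z) y := by
    simp only [activeIdx, Set.mem_setOf_eq, sliceA, sliceB, Sum.elim_inr,
      ContinuousMap.coe_mk, eq_self_iff_true, if_true]
    exact hye
  have hifalse : (Sum.inr false) ∈ activeIdx (sliceA a e) (sliceB b e Z) y := by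
    simp only [activeIdx, Set.mem_setOf_eq, sliceA, sliceB, Sum.elim_inr,
      ContinuousMap.coe_mk, Bool.false_eq_true, if_false]
    rw [sum_neg_mul_left, hye]
  apply Set.Subset.antisymm
  · intro d hd
    constructor
    · rintro w ⟨t, ht, rfl⟩
      exact hd (a t) ⟨Sum.inl t, active_slice_inl.mpr ht, rfl⟩
    · have h1 := hd e ⟨Sum.inr true, hitrue, by simp [sliceA]⟩
      have h2 := hd (-e) ⟨Sum.inr false, hifalse, by simp [sliceA]⟩
      rw [sum_neg_mul_left] at h2
      simp only [Set.mem_setOf_eq]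
      linarith
  · rintro d ⟨hd, hde⟩ w ⟨t', ht', rfl⟩
    simp only [Set.mem_setOf_eq] at hde
    rcases t' with t | bb
    · exact hd (a t) ⟨t, active_slice_inl.mp ht', rfl⟩
    · rcases bb with _ | _
      · show (∑ i, (sliceA a e (Sum.inr false)) i * d i) ≤ 0
        simp only [sliceA, Sum.elim_inr, Bool.false_eq_true, if_false]
        rw [sum_neg_mul_left, hde]
        simp
      · show (∑ i, (sliceA a e (Sum.inr true)) i * d i) ≤ 0
        simp only [sliceA, Sum.elim_inr, eq_self_iff_true, if_true]
        rw [hde]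

/-- The hypothesis (H) is inherited by the sliced system. -/
theorem slice_H (a : T → (Fin n → ℝ)) (b : C(T, ℝ)) (e Z : Fin n → ℝ)
    (hH : ∀ y ∈ feas a b, feasDirs a b y = negPolar (coneHull (a '' activeIdx a b y))) :
    ∀ y ∈ feas (sliceA a e) (sliceB b e Z),
      feasDirs (sliceA a e) (sliceB b e Z) y
        = negPolar (coneHull ((sliceA a e) '' activeIdx (sliceA a e) (sliceB b e Z) y)) := by
  intro y hy
  rw [negPolar_coneHull, negPolar_slice_active a b hy, feasDirs_slice a b hy,
    hH y ((mem_feas_slice_iff a b e Z y).mp hy).1, negPolar_coneHull]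

end SliceH

theorem sum_mul_add_right {n : ℕ} (w x y : Fin n → ℝ) :
    (∑ i, w i * (x + y) i) = (∑ i, w i * x i) + (∑ i, w i * y i) := by
  rw [← Finset.sum_add_distrib]
  refine Finset.sum_congr rfl fun i _ => ?_
  simp only [Pi.add_apply]
  ring

universe u

set_option maxHeartbeats 1000000 in
/-- **Key induction**: under hypothesis (H), the feasible set contains a conical
neighborhood `z + (A(z)° ∩ B(ρ))` at every feasible point `z`.  Induction is on (a bound
for) the dimension of the span of `C - z`. -/
theorem aux_conical {n : ℕ} (d : ℕ) :
    ∀ {T' : Type u} [TopologicalSpace T'] (a' : T' → (Fin n → ℝ)) (b' : C(T', ℝ))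
      (z : Fin n → ℝ), z ∈ feas a' b' →
    (∀ y ∈ feas a' b', feasDirs a' b' y = negPolar (coneHull (a' '' activeIdx a' b' y))) →
    Module.finrank ℝ (Submodule.span ℝ ((fun c => c - z) '' feas a' b')) ≤ d →
    ∃ ρ : ℝ, 0 < ρ ∧ ∀ u ∈ negPolar (coneHull (a' '' activeIdx a' b' z)), ‖u‖ ≤ ρ →
      z + u ∈ feas a' b' := by
  induction d using Nat.strong_induction_on with
  | _ d ih =>
  intro T' instT a' b' z hz hH hdim
  by_contra hcon
  push_neg at hcon
  set NPz := negPolar (coneHull (a' '' activeIdx a' b' z)) with hNPz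
  -- select a failure sequence tending to `z`
  have hsel : ∀ k : ℕ, ∃ u, u ∈ NPz ∧ ‖u‖ ≤ 1 / (k + 1 : ℝ) ∧ z + u ∉ feas a' b' := by
    intro k
    obtain ⟨u, hu1, hu2, hu3⟩ := hcon (1 / (k + 1 : ℝ)) (by positivity)
    exact ⟨u, hu1, hu2, hu3⟩
  choose uS huNP huNorm huNF using hsel
  have huNe : ∀ k, uS k ≠ 0 := by
    intro k h
    exact huNF k (by rw [h, add_zero]; exact hz)
  have hδpos : ∀ k, (0 : ℝ) < ‖uS k‖ := fun k => norm_pos_iff.mpr (huNe k)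
  -- normalized directions & convergent subsequence
  set eS : ℕ → (Fin n → ℝ) := fun k => (‖uS k‖)⁻¹ • uS k with heSdef
  have heS_norm : ∀ k, ‖eS k‖ = 1 := by
    intro k
    rw [heSdef]
    simp only [norm_smul, norm_inv, norm_norm]
    exact inv_mul_cancel₀ (ne_of_gt (hδpos k))
  have heS_sphere : ∀ k, eS k ∈ Metric.sphere (0 : Fin n → ℝ) 1 := by
    intro k
    simp [Metric.mem_sphere, dist_eq_norm, heS_norm k]
  obtain ⟨e, heSph, φ, hφmono, hφlim⟩ :=
    (isCompact_sphere (0 : Fin n → ℝ) 1).tendsto_subseq heS_sphere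
  have he_norm : ‖e‖ = 1 := by simpa [Metric.mem_sphere, dist_eq_norm] using heSph
  have he_ne : e ≠ 0 := by
    intro h
    rw [h, norm_zero] at he_norm
    exact one_ne_zero he_norm.symm
  -- the norms tend to zero along the subsequence
  have hδφ : Filter.Tendsto (fun j => ‖uS (φ j)‖) atTop (𝓝 0) := by
    apply squeeze_zero (fun j => norm_nonneg _) (fun j => (huNorm (φ j)).trans ?_)
      tendsto_one_div_add_atTop_nhds_zero_nat
    apply one_div_le_one_div_of_le (by positivity)
    have : j ≤ φ j := hφmono.le_apply
    exact_mod_cast add_le_add_left (Nat.cast_le.mpr this) 1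
  -- each eS k lies in NPz (cone), hence so does e
  have heSNP : ∀ k, eS k ∈ NPz :=
    fun k => smul_mem_negPolar (huNP k) (inv_nonneg.mpr (norm_nonneg _))
  have heNP : e ∈ NPz := by
    intro w hw
    have hten : Filter.Tendsto (fun j => ∑ i, w i * eS (φ j) i) atTop
        (𝓝 (∑ i, w i * e i)) := by
      apply tendsto_finset_sum
      intro i _
      exact ((tendsto_pi_nhds.mp hφlim) i).const_mul (w i)
    exact le_of_tendsto hten (Filter.Eventually.of_forall fun j => heSNP (φ j) w hw)
  -- use (H) at z : e is a feasible direction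
  have he_fd : e ∈ feasDirs a' b' z := by rw [hH z hz]; exact heNP
  obtain ⟨ε₀, hε₀, hfe⟩ := he_fd
  set ε : ℝ := ε₀ / 2 with hεdef
  have hε : 0 < ε := by positivity
  set Z : Fin n → ℝ := z + ε • e with hZdef
  have hZfeas : Z ∈ feas a' b' := hfe ε ⟨le_of_lt hε, by rw [hεdef]; linarith⟩
  -- active constraints at Z are active at z and orthogonal to e
  have hTZ : ∀ t, t ∈ activeIdx a' b' Z →
      (∑ i, a' t i * e i) = 0 ∧ t ∈ activeIdx a' b' z := by
    intro t ht
    have hA : (∑ i, a' t i * z i) + ε * (∑ i, a' t i * e i) = b' t := by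
      have h := ht
      simp only [activeIdx, Set.mem_setOf_eq] at h
      rw [hZdef] at h
      rwa [sum_mul_add_smul] at h
    have h1 : (∑ i, a' t i * z i) ≤ b' t := hz t
    have h2 : (∑ i, a' t i * z i) + ε₀ * (∑ i, a' t i * e i) ≤ b' t := by
      have := hfe ε₀ ⟨le_of_lt hε₀, le_refl _⟩ t
      rwa [sum_mul_add_smul] at this
    have hε₀ε : ε₀ = 2 * ε := by rw [hεdef]; ring
    have hge : 0 ≤ (∑ i, a' t i * e i) := by nlinarith
    have hle : (∑ i, a' t i * e i) ≤ 0 := by nlinarith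
    have hG : (∑ i, a' t i * e i) = 0 := le_antisymm hle hge
    refine ⟨hG, ?_⟩
    show (∑ i, a' t i * z i) = b' t
    rw [hG, mul_zero, add_zero] at hA
    exact hA
  -- scalar quantities attached to e
  set E : ℝ := ∑ i, e i * e i with hEdef
  have hE : 0 < E := by
    obtain ⟨i₀, hi₀⟩ := Function.ne_iff.mp he_ne
    have hle : e i₀ * e i₀ ≤ E := by
      apply Finset.single_le_sum (f := fun i => e i * e i) (fun i _ => mul_self_nonneg _)
        (Finset.mem_univ i₀)
    nlinarith [mul_self_pos.mpr hi₀]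
  set M : ℝ := (∑ i, |e i|) / E with hMdef
  have hM : 0 ≤ M := by
    apply div_nonneg _ (le_of_lt hE)
    exact Finset.sum_nonneg fun i _ => abs_nonneg _
  -- span machinery
  set U : Submodule ℝ (Fin n → ℝ) := Submodule.span ℝ ((fun c => c - z) '' feas a' b')
    with hUdef
  have hU_mem : ∀ y ∈ feas a' b', y - z ∈ U := fun y hy => Submodule.subset_span ⟨y, hy, rfl⟩
  have hU_uS : ∀ k, uS k ∈ U := by
    intro k
    have hk : uS k ∈ feasDirs a' b' z := by rw [hH z hz]; exact huNP k
    obtain ⟨ε₁, hε₁, hf₁⟩ := hk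
    have hmem := hU_mem _ (hf₁ ε₁ ⟨le_of_lt hε₁, le_refl _⟩)
    rw [add_sub_cancel_left] at hmem
    have h2 := U.smul_mem ε₁⁻¹ hmem
    rwa [smul_smul, inv_mul_cancel₀ (ne_of_gt hε₁), one_smul] at h2
  have hU_e : e ∈ U := by
    have hclosed : IsClosed (U : Set (Fin n → ℝ)) := Submodule.closed_of_finiteDimensional U
    exact hclosed.mem_of_tendsto hφlim
      (Filter.Eventually.of_forall fun j => U.smul_mem _ (hU_uS (φ j)))
  -- the kernel of ⟨e, ·⟩ as a submodule
  set Ksub : Submodule ℝ (Fin n → ℝ) :=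
    { carrier := {v | (∑ i, e i * v i) = 0}
      add_mem' := by
        intro v w hv hw
        simp only [Set.mem_setOf_eq] at hv hw ⊢
        rw [sum_mul_add_right, hv, hw, add_zero]
      zero_mem' := by simp
      smul_mem' := by
        intro c v hv
        simp only [Set.mem_setOf_eq] at hv ⊢
        rw [sum_mul_smul, hv, mul_zero] } with hKsubdef
  have heKsub : e ∉ Ksub := by
    intro h
    have : E = 0 := h
    exact (ne_of_gt hE) this
  have hVlt : U ⊓ Ksub < U := by
    rcases lt_or_eq_of_le (inf_le_left : U ⊓ Ksub ≤ U) with h | h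
    · exact h
    · exact absurd (h.symm ▸ hU_e : e ∈ U ⊓ Ksub).2 heKsub
  have hrank : Module.finrank ℝ (U ⊓ Ksub : Submodule ℝ (Fin n → ℝ)) < Module.finrank ℝ U :=
    Submodule.finrank_lt_finrank_of_lt hVlt
  -- the sliced system at Z with normal e, and the induction hypothesis
  have hZslice : Z ∈ feas (sliceA a' e) (sliceB b' e Z) :=
    (mem_feas_slice_iff a' b' e Z Z).mpr ⟨hZfeas, rfl⟩
  have hHslice := slice_H a' b' e Z hH
  have hspan_le : Submodule.span ℝ
      ((fun c => c - Z) '' feas (sliceA a' e) (sliceB b' e Z)) ≤ U ⊓ Ksub := by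
    rw [Submodule.span_le]
    rintro v ⟨y, hy, rfl⟩
    obtain ⟨hyf, hye⟩ := (mem_feas_slice_iff a' b' e Z y).mp hy
    constructor
    · show y - Z ∈ U
      have h1 : y - z ∈ U := hU_mem y hyf
      have h2 : ε • e ∈ U := U.smul_mem ε hU_e
      have heq : y - Z = (y - z) - ε • e := by rw [hZdef]; abel
      rw [heq]
      exact U.sub_mem h1 h2
    · show (∑ i, e i * (y - Z) i) = 0
      rw [sum_mul_sub_right, hye, sub_self]
  obtain ⟨ρh, hρh, hρconc⟩ := ih (Module.finrank ℝ (U ⊓ Ksub : Submodule ℝ (Fin n → ℝ)))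
    (lt_of_lt_of_le hrank hdim) (sliceA a' e) (sliceB b' e Z) Z hZslice hHslice
    (le_trans (Submodule.finrank_mono hspan_le) (le_refl _))
  -- choose a good index
  set c₂ : ℝ := min (1 / (2 * (M + 1))) (ρh / (2 * ε * (1 + M) + 1)) with hc₂def
  have hc₂pos : 0 < c₂ := by
    apply lt_min
    · apply div_pos one_pos
      nlinarith
    · apply div_pos hρh
      nlinarith
  obtain ⟨N₁, hN₁⟩ := (Metric.tendsto_atTop.mp hδφ) (ε / 2) (by positivity)
  obtain ⟨N₂, hN₂⟩ := (Metric.tendsto_atTop.mp hφlim) c₂ hc₂pos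
  set k : ℕ := φ (max N₁ N₂) with hkdef
  have hδk : ‖uS k‖ ≤ ε / 2 := by
    have h := hN₁ (max N₁ N₂) (le_max_left _ _)
    rw [dist_zero_right, Real.norm_eq_abs, abs_of_nonneg (norm_nonneg _)] at h
    rw [← hkdef] at h
    exact le_of_lt h
  have hek_close : ‖eS k - e‖ ≤ c₂ := by
    have h := hN₂ (max N₁ N₂) (le_max_right _ _)
    simp only [Function.comp_apply] at h
    rw [dist_eq_norm, ← hkdef] at h
    exact le_of_lt h
  set δ : ℝ := ‖uS k‖ with hδdef
  have hδp : 0 < δ := hδpos k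
  by_cases hcase : eS k = e
  · -- degenerate case: failing point lies on the ray through e
    apply huNF k
    have huk : uS k = δ • e := by
      rw [← hcase, hδdef, heSdef]
      exact (smul_inv_smul₀ (ne_of_gt (hδpos k)) (uS k)).symm
    rw [huk]
    refine hfe δ ⟨le_of_lt hδp, ?_⟩
    rw [hεdef] at hδk
    linarith
  · -- main case
    set δb : ℝ := ‖eS k - e‖ with hδbdef
    have hδbpos : 0 < δb := by
      rw [hδbdef]
      exact norm_pos_iff.mpr (sub_ne_zero.mpr hcase)
    set w : Fin n → ℝ := δb⁻¹ • (eS k - e) with hwdef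
    have hw_norm : ‖w‖ = 1 := by
      rw [hwdef, norm_smul, Real.norm_eq_abs, abs_of_pos (inv_pos.mpr hδbpos), ← hδbdef]
      exact inv_mul_cancel₀ (ne_of_gt hδbpos)
    set s : ℝ := (∑ i, e i * w i) / E with hsdef
    have hs_bound : |s| ≤ M := by
      rw [hsdef, hMdef, abs_div, abs_of_pos hE]
      gcongr
      calc |∑ i, e i * w i| ≤ ∑ i, |e i * w i| := Finset.abs_sum_le_sum_abs _ _
        _ ≤ ∑ i, |e i| := by
            apply Finset.sum_le_sum
            intro i _
            rw [abs_mul]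
            have hwi : |w i| ≤ 1 := by
              have h := norm_le_pi_norm w i
              rwa [hw_norm, Real.norm_eq_abs] at h
            nlinarith [abs_nonneg (e i)]
    set p : Fin n → ℝ := w - s • e with hpdef
    have hep : (∑ i, e i * p i) = 0 := by
      rw [hpdef, sum_mul_sub_smul, hsdef]
      rw [← hEdef, div_mul_cancel₀ _ (ne_of_gt hE), sub_self]
    have hp_norm : ‖p‖ ≤ 1 + M := by
      rw [hpdef]
      calc ‖w - s • e‖ ≤ ‖w‖ + ‖s • e‖ := norm_sub_le _ _
        _ = 1 + |s| * 1 := by rw [hw_norm, norm_smul, he_norm, Real.norm_eq_abs]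
        _ ≤ 1 + M := by linarith [hs_bound]
    have hδb1 : δb ≤ 1 / (2 * (M + 1)) := le_trans hek_close (min_le_left _ _)
    have hδb2 : δb ≤ ρh / (2 * ε * (1 + M) + 1) := le_trans hek_close (min_le_right _ _)
    have h2M : (0:ℝ) < 2 * (M + 1) := by linarith
    have hδbM : δb * (2 * (M + 1)) ≤ 1 := (le_div_iff₀ h2M).mp hδb1
    have hδbs_half : |δb * s| ≤ 1 / 2 := by
      rw [abs_mul, abs_of_pos hδbpos]
      have hA : δb * |s| ≤ δb * M := mul_le_mul_of_nonneg_left hs_bound hδbpos.le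
      have hBM := hδbM
      ring_nf at hBM
      nlinarith [hA, hBM, hδbpos.le]
    have h1ds_lb : (1 : ℝ) / 2 ≤ 1 + δb * s := by
      have h := abs_le.mp hδbs_half
      linarith [h.1]
    have h1ds_ub : 1 + δb * s ≤ 2 := by
      have h := abs_le.mp hδbs_half
      linarith [h.2]
    have h1ds_pos : (0 : ℝ) < 1 + δb * s := by linarith
    -- p lies in the negPolar of the sliced active cone at Z
    have hpNP : p ∈ negPolar (coneHull
        ((sliceA a' e) '' activeIdx (sliceA a' e) (sliceB b' e Z) Z)) := by
      rw [negPolar_coneHull]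
      rintro v ⟨t'', ht'', rfl⟩
      rcases t'' with t | bb
      · have ht : t ∈ activeIdx a' b' Z := active_slice_inl.mp ht''
        obtain ⟨hGe, htz⟩ := hTZ t ht
        show (∑ i, (sliceA a' e (Sum.inl t)) i * p i) ≤ 0
        have hgoal : (∑ i, a' t i * p i) ≤ 0 := by
          rw [hpdef, sum_mul_sub_smul, hGe, mul_zero, sub_zero, hwdef, sum_mul_smul,
            sum_mul_sub_right, hGe, sub_zero]
          apply mul_nonpos_of_nonneg_of_nonpos (inv_nonneg.mpr hδbpos.le)
          have h := heSNP k
          rw [hNPz, negPolar_coneHull] at h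
          exact h (a' t) ⟨t, htz, rfl⟩
        simpa [sliceA] using hgoal
      · rcases bb with _ | _
        · show (∑ i, (sliceA a' e (Sum.inr false)) i * p i) ≤ 0
          simp only [sliceA, Sum.elim_inr, Bool.false_eq_true, if_false]
          rw [sum_neg_mul_left, hep]
          simp
        · show (∑ i, (sliceA a' e (Sum.inr true)) i * p i) ≤ 0
          simp only [sliceA, Sum.elim_inr, eq_self_iff_true, if_true]
          rw [hep]
    set c : ℝ := ε * δb / (1 + δb * s) with hcdef
    have hc_nonneg : 0 ≤ c :=
      div_nonneg (by nlinarith [hε.le, hδbpos.le]) h1ds_pos.le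
    have hc_le : c ≤ 2 * ε * δb := by
      rw [hcdef, div_le_iff₀ h1ds_pos]
      nlinarith [h1ds_lb, hε.le, hδbpos.le, mul_nonneg hε.le hδbpos.le]
    have hcp_norm : ‖c • p‖ ≤ ρh := by
      rw [norm_smul, Real.norm_eq_abs, abs_of_nonneg hc_nonneg]
      have hDpos : (0:ℝ) < 2 * ε * (1 + M) + 1 := by nlinarith [hε, hM]
      have hδbρ : δb * (2 * ε * (1 + M) + 1) ≤ ρh := (le_div_iff₀ hDpos).mp hδb2
      calc c * ‖p‖ ≤ (2 * ε * δb) * (1 + M) := by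
            apply mul_le_mul hc_le hp_norm (norm_nonneg p)
            nlinarith [hε.le, hδbpos.le]
        _ ≤ ρh := by nlinarith [hδbpos.le]
    have hZp : Z + c • p ∈ feas a' b' := by
      have h := hρconc (c • p) (smul_mem_negPolar hpNP hc_nonneg) hcp_norm
      exact ((mem_feas_slice_iff a' b' e Z _).mp h).1
    -- the exact convex combination giving the contradiction
    set μ : ℝ := δ * (1 + δb * s) / ε with hμdef
    have hμ0 : 0 ≤ μ := div_nonneg (mul_nonneg hδp.le h1ds_pos.le) hε.le
    have hμ1 : μ ≤ 1 := by
      rw [hμdef, div_le_one hε]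
      have h := mul_le_mul hδk h1ds_ub h1ds_pos.le (by nlinarith [hε.le] : (0:ℝ) ≤ ε / 2)
      calc δ * (1 + δb * s) ≤ ε / 2 * 2 := h
        _ = ε := by ring
    have hμε : μ * ε = δ * (1 + δb * s) := by
      rw [hμdef]
      field_simp
    have hμc : μ * c = δ * δb := by
      rw [hμdef, hcdef]
      field_simp
    have hvec : z + uS k = (1 - μ) • z + μ • (Z + c • p) := by
      have h1 : uS k = δ • eS k := by
        rw [hδdef, heSdef]
        exact (smul_inv_smul₀ (ne_of_gt (hδpos k)) (uS k)).symm
      have h2 : eS k = e + δb • w := by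
        rw [hwdef, smul_inv_smul₀ (ne_of_gt hδbpos)]
        abel
      have h3 : w = p + s • e := by
        rw [hpdef]
        abel
      rw [h1, h2, h3, hZdef]
      ext i
      simp only [Pi.add_apply, Pi.smul_apply, Pi.sub_apply, smul_eq_mul]
      linear_combination (-(e i)) * hμε - (p i) * hμc
    apply huNF k
    rw [hvec]
    exact feas_convex a' b' hz hZp (by linarith) hμ0 (by ring)


/-- Lemma `Lem1`, from Li–Meng–Yang. For `b̄ ∈ dom F` the following are
equivalent: (i) `D(F(b̄), x̄) = A(x̄)°` for every `x̄ ∈ F(b̄)` (local polyhedrality);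
(ii) for every `x̄ ∈ F(b̄)` there is a neighborhood `W` of `x̄` with
`F(b̄) ∩ W = (x̄ + A(x̄)°) ∩ W`. -/
theorem LOP_iff_regularity
    {n : ℕ} {T : Type*} [MetricSpace T] [CompactSpace T]
    (a : T → (Fin n → ℝ)) (ha : Continuous a)
    (bbar : C(T, ℝ)) (hdom : (feas a bbar).Nonempty) :
    (∀ xbar ∈ feas a bbar,
        feasDirs a bbar xbar = negPolar (coneHull (a '' activeIdx a bbar xbar))) ↔
    (∀ xbar ∈ feas a bbar, ∃ W ∈ 𝓝 xbar,
        feas a bbar ∩ W =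
          ((fun u => xbar + u) '' negPolar (coneHull (a '' activeIdx a bbar xbar))) ∩ W) := by
  constructor
  · -- (i) ⇒ (ii)
    intro hH xbar hx
    obtain ⟨ρ, hρ, hconc⟩ := aux_conical n a bbar xbar hx hH
      (le_trans (Submodule.finrank_le _) (by simp [Module.finrank_pi]))
    refine ⟨Metric.ball xbar ρ, Metric.ball_mem_nhds _ hρ, ?_⟩
    ext y
    constructor
    · rintro ⟨hyf, hyW⟩
      refine ⟨⟨y - xbar, ?_, by show xbar + (y - xbar) = y; abel⟩, hyW⟩
      rw [← hH xbar hx]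
      exact sub_mem_feasDirs a bbar hx hyf
    · rintro ⟨⟨u, hu, rfl⟩, hyW⟩
      refine ⟨?_, hyW⟩
      apply hconc u hu
      have h := hyW
      rw [Metric.mem_ball, dist_eq_norm, add_sub_cancel_left] at h
      exact le_of_lt h
  · -- (ii) ⇒ (i)
    intro hreg xbar hx
    obtain ⟨W, hW, heq⟩ := hreg xbar hx
    apply Set.Subset.antisymm (feasDirs_subset_negPolar a bbar xbar)
    -- negPolar ⊆ feasDirs
    intro u hu
    obtain ⟨r, hr, hball⟩ := Metric.mem_nhds_iff.mp hW
    refine ⟨r / (2 * (‖u‖ + 1)), by positivity, ?_⟩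
    intro α ⟨hα0, hαε⟩
    have hmem : α • u ∈ negPolar (coneHull (a '' activeIdx a bbar xbar)) :=
      smul_mem_negPolar hu hα0
    have hWmem : xbar + α • u ∈ W := by
      apply hball
      simp only [Metric.mem_ball, dist_eq_norm, add_sub_cancel_left]
      rw [norm_smul, Real.norm_eq_abs, abs_of_nonneg hα0]
      have h1 : α * ‖u‖ ≤ r / (2 * (‖u‖ + 1)) * ‖u‖ :=
        mul_le_mul_of_nonneg_right hαε (norm_nonneg u)
      have h2 : r / (2 * (‖u‖ + 1)) * ‖u‖ < r := by
        rw [div_mul_eq_mul_div, div_lt_iff₀ (by positivity)]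
        nlinarith [norm_nonneg u]
      linarith
    have hfm : xbar + α • u ∈ feas a bbar ∩ W := by
      rw [heq]
      exact ⟨⟨α • u, hmem, rfl⟩, hWmem⟩
    exact hfm.1
end
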